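/- Let |f'''| belong to Q([a,b]). Then |∫_a^b f(x) dx - ((b-a)/6)(f(a) + 4f((a+b)/2) + f(b))| ≤ ((b-a)^4/6)(3/8 - (1/2)ln 2)(|f'''(a)| + |f'''(b)|). -/

import Mathlib

/-!
Integrating by parts three times against the kernel `(s - p)² (c - s) / 6` on each half of
`[a, b]` (endpoint `p`, midpoint `c`), and reflecting the right half onto the left, writes the
Simpson error as `∫₀ʰ K t * (f''' (a + t) - f''' (b - t)) dt` with `h = (b - a) / 2` and
`K t = t² (h - t) / 6 ≥ 0`. Applied at the two endpoints, the `Q`-property gives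
`|f''' (a + t)| + |f''' (b - t)| ≤ (|f''' a| + |f''' b|) (b - a)² / (t (b - a - t))`, and the
resulting majorant `t (h - t) / (b - a - t)` integrates over `[0, h]` to
`(b - a)² (3/8 - log 2 / 2)`.
-/

open MeasureTheory intervalIntegral Set

-- Peano kernel of Simpson's rule on the half-interval from the endpoint `p` to the midpoint `c`.
noncomputable def simpsonKernel (p c s : ℝ) : ℝ := (s - p) ^ 2 * (c - s) / 6

theorem hasDerivAt_simpsonKernel (p c t : ℝ) :
    HasDerivAt (simpsonKernel p c) ((t - p) * (2 * c + p - 3 * t) / 6) t :=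
  ((((hasDerivAt_id' t).sub_const p).pow 2).mul ((hasDerivAt_id' t).const_sub c)).div_const 6
    |>.congr_deriv (by simp only [Pi.pow_apply]; ring)

theorem integral_simpsonKernel_mul_eq {f f' f'' f''' : ℝ → ℝ} {p c : ℝ}
    (hf : ∀ x ∈ uIcc p c, HasDerivAt f (f' x) x)
    (hf' : ∀ x ∈ uIcc p c, HasDerivAt f' (f'' x) x)
    (hf'' : ∀ x ∈ uIcc p c, HasDerivAt f'' (f''' x) x)
    (hint : IntervalIntegrable f''' volume p c) :
    ∫ s in p..c, simpsonKernel p c s * f''' s =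
      (∫ s in p..c, f s) + (c - p) ^ 2 / 6 * f' c - 2 * (c - p) / 3 * f c
        - (c - p) / 3 * f p := by
  have hKf : IntervalIntegrable (fun s => simpsonKernel p c s * f''' s) volume p c :=
    hint.continuousOn_mul (by unfold simpsonKernel; fun_prop)
  have hfi : IntervalIntegrable f volume p c :=
    ContinuousOn.intervalIntegrable fun x hx => (hf x hx).continuousAt.continuousWithinAt
  -- `K f'' - K' f' + K'' f` differentiates to `K f''' - f` because `K''' = -1`.
  have hF : ∀ t ∈ uIcc p c, HasDerivAt
      (fun t => simpsonKernel p c t * f'' t - (t - p) * (2 * c + p - 3 * t) / 6 * f' t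
        + (c + 2 * p - 3 * t) / 3 * f t)
      (simpsonKernel p c t * f''' t - f t) t := by
    intro t ht
    have hK' : HasDerivAt (fun t => (t - p) * (2 * c + p - 3 * t) / 6)
        ((c + 2 * p - 3 * t) / 3) t :=
      (((hasDerivAt_id' t).sub_const p).mul
        (((hasDerivAt_id' t).const_mul 3).const_sub (2 * c + p))).div_const 6
        |>.congr_deriv (by ring)
    have hK'' : HasDerivAt (fun t => (c + 2 * p - 3 * t) / 3) (-1) t :=
      (((hasDerivAt_id' t).const_mul 3).const_sub (c + 2 * p)).div_const 3
        |>.congr_deriv (by norm_num)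
    exact (((hasDerivAt_simpsonKernel p c t).mul (hf'' t ht)).sub (hK'.mul (hf' t ht))).add
      (hK''.mul (hf t ht)) |>.congr_deriv (by ring)
  have hFTC := integral_eq_sub_of_hasDerivAt hF (hKf.sub hfi)
  rw [integral_sub hKf hfi] at hFTC
  unfold simpsonKernel at hFTC ⊢
  linear_combination hFTC

theorem integral_simpsonKernel_mul_comp_add_left (a h : ℝ) (g : ℝ → ℝ) :
    ∫ t in 0..h, simpsonKernel 0 h t * g (a + t) =
      ∫ s in a..a + h, simpsonKernel a (a + h) s * g s := by
  have := integral_comp_add_left (fun s => simpsonKernel a (a + h) s * g s) a (a := 0) (b := h)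
  rw [add_zero] at this
  rw [← this]
  congr 1; ext t; unfold simpsonKernel; ring

theorem integral_simpsonKernel_mul_comp_sub_left (b h : ℝ) (g : ℝ → ℝ) :
    ∫ t in 0..h, simpsonKernel 0 h t * g (b - t) =
      ∫ s in b..b - h, simpsonKernel b (b - h) s * g s := by
  have := integral_comp_sub_left (fun s => simpsonKernel b (b - h) s * g s) b (a := 0) (b := h)
  rw [sub_zero] at this
  rw [integral_symm (b - h) b, ← this, ← intervalIntegral.integral_neg]
  congr 1; ext t; unfold simpsonKernel; ring

theorem simpson_error_eq_integral_simpsonKernel {f f' f'' f''' : ℝ → ℝ} {a b : ℝ}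
    (hab : a ≤ b)
    (hf : ∀ x ∈ Icc a b, HasDerivAt f (f' x) x)
    (hf' : ∀ x ∈ Icc a b, HasDerivAt f' (f'' x) x)
    (hf'' : ∀ x ∈ Icc a b, HasDerivAt f'' (f''' x) x)
    (hint : IntegrableOn f''' (Icc a b)) :
    (∫ x in a..b, f x) - (b - a) / 6 * (f a + 4 * f ((a + b) / 2) + f b) =
      ∫ t in 0..(b - a) / 2, simpsonKernel 0 ((b - a) / 2) t * (f''' (a + t) - f''' (b - t)) := by
  generalize hdef : (b - a) / 2 = h
  obtain rfl : b = a + 2 * h := by linarith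
  have hsub_left : uIcc a (a + h) ⊆ Icc a (a + 2 * h) := by
    rw [uIcc_of_le (by linarith)]; exact Icc_subset_Icc_right (by linarith)
  have hsub_right : uIcc (a + 2 * h) (a + h) ⊆ Icc a (a + 2 * h) := by
    rw [uIcc_of_ge (by linarith)]; exact Icc_subset_Icc_left (by linarith)
  have hint_left := (hint.mono_set hsub_left).intervalIntegrable
  have hint_right := (hint.mono_set hsub_right).intervalIntegrable
  have hi_left : IntervalIntegrable (fun t => simpsonKernel 0 h t * f''' (a + t)) volume 0 h := by
    have := hint_left.comp_add_left a
    rw [sub_self, add_sub_cancel_left] at this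
    exact this.continuousOn_mul (by unfold simpsonKernel; fun_prop)
  have hi_right :
      IntervalIntegrable (fun t => simpsonKernel 0 h t * f''' (a + 2 * h - t)) volume 0 h := by
    have := hint_right.comp_sub_left (a + 2 * h)
    rw [sub_self, show a + 2 * h - (a + h) = h by ring] at this
    exact this.continuousOn_mul (by unfold simpsonKernel; fun_prop)
  have hfi_left : IntervalIntegrable f volume a (a + h) :=
    ContinuousOn.intervalIntegrable fun x hx =>
      (hf x (hsub_left hx)).continuousAt.continuousWithinAt
  have hfi_right : IntervalIntegrable f volume (a + h) (a + 2 * h) :=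
    ContinuousOn.intervalIntegrable fun x hx =>
      (hf x (hsub_right (uIcc_comm (a + h) _ ▸ hx))).continuousAt.continuousWithinAt
  simp_rw [mul_sub]
  rw [integral_sub hi_left hi_right, integral_simpsonKernel_mul_comp_add_left,
    integral_simpsonKernel_mul_comp_sub_left, show a + 2 * h - h = a + h by ring,
    integral_simpsonKernel_mul_eq (fun x hx => hf x (hsub_left hx))
      (fun x hx => hf' x (hsub_left hx)) (fun x hx => hf'' x (hsub_left hx)) hint_left,
    integral_simpsonKernel_mul_eq (fun x hx => hf x (hsub_right hx))
      (fun x hx => hf' x (hsub_right hx)) (fun x hx => hf'' x (hsub_right hx)) hint_right,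
    integral_symm (a + h) (a + 2 * h), show (a + (a + 2 * h)) / 2 = a + h by ring,
    ← integral_add_adjacent_intervals hfi_left hfi_right]
  ring

-- The class `Q(s)` of Godunova and Levin.
def IsGodunovaLevin (s : Set ℝ) (g : ℝ → ℝ) : Prop :=
  ∀ x ∈ s, ∀ y ∈ s, ∀ l ∈ Ioo (0 : ℝ) 1,
    g (l * x + (1 - l) * y) ≤ g x / l + g y / (1 - l)

theorem IsGodunovaLevin.le_of_mem_Ioo {s : Set ℝ} {g : ℝ → ℝ} (hg : IsGodunovaLevin s g)
    {x y z : ℝ} (hx : x ∈ s) (hy : y ∈ s) (hz : z ∈ Ioo x y) :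
    g z ≤ (y - x) * (g x / (y - z) + g y / (z - x)) := by
  obtain ⟨hxz, hzy⟩ := hz
  have hyx : 0 < y - x := by linarith
  have key := hg x hx y hy ((y - z) / (y - x))
    ⟨div_pos (by linarith) hyx, (div_lt_one hyx).2 (by linarith)⟩
  rw [show (y - z) / (y - x) * x + (1 - (y - z) / (y - x)) * y = z by field_simp; ring,
    show 1 - (y - z) / (y - x) = (z - x) / (y - x) by field_simp; ring,
    div_div_eq_mul_div, div_div_eq_mul_div] at key
  exact key.trans_eq (by ring)

theorem IsGodunovaLevin.add_le_of_mem_Ioo {a b : ℝ} {g : ℝ → ℝ}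
    (hg : IsGodunovaLevin (Icc a b) g) {t : ℝ} (ht : t ∈ Ioo 0 (b - a)) :
    g (a + t) + g (b - t) ≤ (g a + g b) * ((b - a) ^ 2 / (t * (b - a - t))) := by
  obtain ⟨ht0, htL⟩ := ht
  have ha : a ∈ Icc a b := left_mem_Icc.2 (by linarith)
  have hb : b ∈ Icc a b := right_mem_Icc.2 (by linarith)
  have h1 := hg.le_of_mem_Ioo ha hb (z := a + t) ⟨by linarith, by linarith⟩
  have h2 := hg.le_of_mem_Ioo ha hb (z := b - t) ⟨by linarith, by linarith⟩
  have hLt : b - a - t ≠ 0 := by linarith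
  calc g (a + t) + g (b - t) ≤ (b - a) * (g a / (b - (a + t)) + g b / (a + t - a))
        + (b - a) * (g a / (b - (b - t)) + g b / (b - t - a)) := add_le_add h1 h2
    _ = (g a + g b) * ((b - a) ^ 2 / (t * (b - a - t))) := by
      rw [show b - (a + t) = b - a - t by ring, show b - t - a = b - a - t by ring,
        sub_sub_cancel, add_sub_cancel_left]
      field_simp
      ring

theorem abs_simpsonKernel_mul_sub_le {a b t : ℝ} {u : ℝ → ℝ}
    (hu : IsGodunovaLevin (Icc a b) fun x => |u x|) (ht : t ∈ Ioc 0 ((b - a) / 2)) :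
    |simpsonKernel 0 ((b - a) / 2) t * (u (a + t) - u (b - t))|
      ≤ (|u a| + |u b|) * ((b - a) ^ 2 / 6) * (t * ((b - a) / 2 - t) / (b - a - t)) := by
  obtain ⟨ht0, hth⟩ := ht
  have hK : 0 ≤ simpsonKernel 0 ((b - a) / 2) t := by unfold simpsonKernel; positivity
  calc |simpsonKernel 0 ((b - a) / 2) t * (u (a + t) - u (b - t))|
      ≤ simpsonKernel 0 ((b - a) / 2) t * (|u (a + t)| + |u (b - t)|) := by
        rw [abs_mul, abs_of_nonneg hK]
        exact mul_le_mul_of_nonneg_left (abs_sub _ _) hK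
    _ ≤ simpsonKernel 0 ((b - a) / 2) t * ((|u a| + |u b|) * ((b - a) ^ 2 / (t * (b - a - t)))) :=
        mul_le_mul_of_nonneg_left (hu.add_le_of_mem_Ioo ⟨ht0, by linarith⟩) hK
    _ = (|u a| + |u b|) * ((b - a) ^ 2 / 6) * (t * ((b - a) / 2 - t) / (b - a - t)) := by
        have hLt : b - a - t ≠ 0 := by linarith
        unfold simpsonKernel
        field_simp
        ring

theorem intervalIntegrable_mul_sub_div_sub {L : ℝ} (hL : 0 < L) :
    IntervalIntegrable (fun t => t * (L / 2 - t) / (L - t)) volume 0 (L / 2) := by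
  refine ContinuousOn.intervalIntegrable fun t ht => ContinuousAt.continuousWithinAt ?_
  rw [uIcc_of_le (by linarith)] at ht
  exact ContinuousAt.div (by fun_prop) (by fun_prop) (by linarith [ht.2])

theorem integral_mul_sub_div_sub {L : ℝ} (hL : 0 < L) :
    ∫ t in 0..L / 2, t * (L / 2 - t) / (L - t) = L ^ 2 * (3 / 8 - Real.log 2 / 2) := by
  have hderiv : ∀ t ∈ uIcc 0 (L / 2), HasDerivAt
      (fun t => t ^ 2 / 2 + L * t / 2 + L ^ 2 / 2 * Real.log (L - t))
      (t * (L / 2 - t) / (L - t)) t := fun t ht => by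
    rw [uIcc_of_le (by linarith)] at ht
    have hLt : L - t ≠ 0 := by linarith [ht.2]
    refine ((((hasDerivAt_pow 2 t).div_const 2).add
      ((hasDerivAt_id' t).const_mul L |>.div_const 2)).add
      ((((hasDerivAt_id' t).const_sub L).log hLt).const_mul (L ^ 2 / 2))).congr_deriv ?_
    field_simp
    ring
  rw [integral_eq_sub_of_hasDerivAt hderiv (intervalIntegrable_mul_sub_div_sub hL),
    show L - L / 2 = L / 2 by ring, Real.log_div hL.ne' two_ne_zero, sub_zero]
  ring

theorem cor12 (a b : ℝ) (hab : a < b)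
    (f f' f'' f''' : ℝ → ℝ)
    (hf : ∀ x ∈ Set.Icc a b, HasDerivAt f (f' x) x)
    (hf' : ∀ x ∈ Set.Icc a b, HasDerivAt f' (f'' x) x)
    (hf'' : ∀ x ∈ Set.Icc a b, HasDerivAt f'' (f''' x) x)
    (hint : IntegrableOn f''' (Set.Icc a b))
    (hQ : ∀ x ∈ Set.Icc a b, ∀ y ∈ Set.Icc a b, ∀ l ∈ Set.Ioo (0:ℝ) 1,
      |f''' (l * x + (1 - l) * y)| ≤ |f''' x| / l + |f''' y| / (1 - l)) :
    |(∫ x in a..b, f x) - ((b - a) / 6) * (f a + 4 * f ((a + b) / 2) + f b)|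
    ≤ ((b - a) ^ 4 / 6) * (3 / 8 - (1 / 2) * Real.log 2) * (|f''' a| + |f''' b|) := by
  rw [simpson_error_eq_integral_simpsonKernel hab.le hf hf' hf'' hint]
  calc _ ≤ ∫ t in 0..(b - a) / 2,
          (|f''' a| + |f''' b|) * ((b - a) ^ 2 / 6) * (t * ((b - a) / 2 - t) / (b - a - t)) :=
        (Real.norm_eq_abs _).symm.trans_le <| norm_integral_le_of_norm_le (by linarith)
          (ae_of_all _ fun t ht => abs_simpsonKernel_mul_sub_le hQ ht)
          ((intervalIntegrable_mul_sub_div_sub (sub_pos.2 hab)).const_mul _)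
    _ = _ := by
      rw [intervalIntegral.integral_const_mul, integral_mul_sub_div_sub (sub_pos.2 hab)]
      ring
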